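/- arXiv:2604.17792 — 4 statements merged into one kernel-verified Lean document; each statement's English description precedes it below -/
import Mathlib

section
/- The action of Sp_{2n}(ℝ) on the Siegel upper half-space H_n is transitive: for every Z ∈ H_n there exists g ∈ Sp_{2n}(ℝ) with g·(i1_n) = Z. Consequently H_n ≅ Sp_{2n}(ℝ)/U_n(ℝ), where U_n(ℝ) is the stabilizer of i1_n. -/
open Matrix ComplexOrder

/-- The standard symplectic form matrix `J = [[0, 1ₙ], [-1ₙ, 0]]`. -/
def siegelJ (n : ℕ) : Matrix (Fin n ⊕ Fin n) (Fin n ⊕ Fin n) ℝ :=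
  Matrix.fromBlocks 0 1 (-1) 0

/-- The symplectic group `Sp_{2n}(ℝ)`: real `2n × 2n` matrices `g` with `gᵀ J g = J`. -/
def Sp (n : ℕ) : Set (Matrix (Fin n ⊕ Fin n) (Fin n ⊕ Fin n) ℝ) :=
  {g | gᵀ * siegelJ n * g = siegelJ n}

/-- The Siegel upper half-space `H_n`. -/
def SiegelUHS (n : ℕ) : Set (Matrix (Fin n) (Fin n) ℂ) :=
  {Z | Zᵀ = Z ∧ ((2 * Complex.I)⁻¹ • (Z - Z.map (starRingEnd ℂ))).PosDef}

/-- The action `g · Z = (AZ + B)(CZ + D)⁻¹`, where `g = [[A,B],[C,D]]` in `n × n` blocks. -/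
noncomputable def spAct {n : ℕ} (g : Matrix (Fin n ⊕ Fin n) (Fin n ⊕ Fin n) ℝ)
    (Z : Matrix (Fin n) (Fin n) ℂ) : Matrix (Fin n) (Fin n) ℂ :=
  (g.toBlocks₁₁.map Complex.ofReal * Z + g.toBlocks₁₂.map Complex.ofReal) *
    (g.toBlocks₂₁.map Complex.ofReal * Z + g.toBlocks₂₂.map Complex.ofReal)⁻¹

/-!
Write `(M; N) = g (Z; 1)`, so that `g · Z = M N⁻¹`. Since `g` is real and symplectic it preserves
the hermitian form `Pᴴ J P`, which gives `Nᴴ M - Mᴴ N = Z - Zᴴ = 2i Im Z`. For `Z ∈ H_n` this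
forces `N` to be invertible (a kernel vector `v` would have `v* (Im Z) v = 0`), and then the
projective description of the action shows `(g g') · Z = g · (g' · Z)`; the fibres of
`g ↦ g · i1ₙ` are the cosets of the stabilizer, with `u = g⁻¹ g'`.
For transitivity write `Z = X + iY` and `Y = R Rᵀ` with `R` invertible: the symplectic matrix
`[[R, X R⁻ᵀ], [0, R⁻ᵀ]]` sends `i1ₙ` to `X + i R Rᵀ = Z`.
-/

namespace SymplecticGroup

variable {l R : Type*} [DecidableEq l] [Fintype l] [CommRing R]

lemma transpose_mul_J_mul_mul {k : Type*} {A : Matrix (l ⊕ l) (l ⊕ l) R}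
    (hA : A ∈ symplecticGroup l R) (P : Matrix (l ⊕ l) k R) :
    Aᵀ * (J l R * (A * P)) = J l R * P := by
  rw [← Matrix.mul_assoc, ← Matrix.mul_assoc, mem_iff'.mp hA]

lemma nonsing_inv_mem {A : Matrix (l ⊕ l) (l ⊕ l) R} (hA : A ∈ symplecticGroup l R) :
    A⁻¹ ∈ symplecticGroup l R := by
  simpa only [coe_inv'] using (⟨A, hA⟩⁻¹ : symplecticGroup l R).2

lemma fromBlocks_mem_of_transpose_mul_eq_one {X S T : Matrix l l R} (hX : Xᵀ = X)
    (hST : Sᵀ * T = 1) : fromBlocks S (X * T) 0 T ∈ symplecticGroup l R := by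
  rw [fromBlocks_mem_iff]
  refine ⟨by simp, ?_, by simpa using hST⟩
  rw [transpose_mul, hX, Matrix.mul_assoc]

end SymplecticGroup

namespace Matrix

lemma conjTranspose_map_ofReal {m p : Type*} (M : Matrix m p ℝ) :
    (M.map Complex.ofReal)ᴴ = (M.map Complex.ofReal)ᵀ := by
  ext i j
  simp

lemma map_ofReal_mul {l m p : Type*} [Fintype m] (A : Matrix l m ℝ) (B : Matrix m p ℝ) :
    (A * B).map Complex.ofReal = A.map Complex.ofReal * B.map Complex.ofReal :=
  Matrix.map_mul (f := Complex.ofRealHom)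

lemma PosDef.of_map_ofReal {m : Type*} [Fintype m] {Y : Matrix m m ℝ}
    (h : (Y.map Complex.ofReal).PosDef) : Y.PosDef := by
  refine PosDef.of_dotProduct_mulVec_pos ?_ fun x hx => ?_
  · refine map_injective Complex.ofReal_injective
      (?_ : Yᴴ.map Complex.ofReal = Y.map Complex.ofReal)
    rw [conjTranspose_eq_transpose_of_trivial, transpose_map, ← conjTranspose_map_ofReal, h.1]
  · have hxc : Complex.ofReal ∘ x ≠ 0 := fun h0 => hx (funext fun i => by
      simpa using congrFun h0 i)
    have hform : star (Complex.ofReal ∘ x) ⬝ᵥ (Y.map Complex.ofReal *ᵥ (Complex.ofReal ∘ x)) =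
        ((x ⬝ᵥ Y *ᵥ x : ℝ) : ℂ) := by
      simp only [dotProduct, mulVec, Matrix.map_apply, Pi.star_apply, Function.comp_apply,
        Complex.star_def, Complex.conj_ofReal]
      push_cast
      rfl
    exact Complex.zero_lt_real.mp (hform ▸ h.dotProduct_mulVec_pos hxc)

variable {l : Type*} [DecidableEq l] [Fintype l]

lemma map_ofReal_mem_symplecticGroup {g : Matrix (l ⊕ l) (l ⊕ l) ℝ}
    (hg : g ∈ symplecticGroup l ℝ) : g.map Complex.ofReal ∈ symplecticGroup l ℂ :=
  SymplecticGroup.map_mem hg Complex.ofRealHom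

lemma conjTranspose_J_mul_map_ofReal {k : Type*} {g : Matrix (l ⊕ l) (l ⊕ l) ℝ}
    (hg : g ∈ symplecticGroup l ℝ) (P : Matrix (l ⊕ l) k ℂ) :
    (g.map Complex.ofReal * P)ᴴ * J l ℂ * (g.map Complex.ofReal * P) = Pᴴ * J l ℂ * P := by
  simp only [conjTranspose_mul, conjTranspose_map_ofReal, Matrix.mul_assoc,
    SymplecticGroup.transpose_mul_J_mul_mul (map_ofReal_mem_symplecticGroup hg)]

lemma conjTranspose_fromRows_J_fromRows {R k : Type*} [CommRing R] [StarRing R]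
    (M N : Matrix l k R) :
    (fromRows M N)ᴴ * J l R * fromRows M N = Nᴴ * M - Mᴴ * N := by
  rw [conjTranspose_fromRows_eq_fromCols_conjTranspose, J, fromCols_mul_fromBlocks,
    fromCols_mul_fromRows]
  simp only [Matrix.mul_zero, Matrix.mul_neg, Matrix.neg_mul, Matrix.mul_one, add_zero, zero_add,
    ← sub_eq_add_neg]

lemma isUnit_det_of_posDef_smul_sub {M N : Matrix l l ℂ} (c : ℂ)
    (hpos : (c • (Nᴴ * M - Mᴴ * N)).PosDef) : IsUnit N.det := by
  rw [isUnit_iff_ne_zero]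
  intro hN
  obtain ⟨v, hv, hNv⟩ := exists_mulVec_eq_zero_iff.mpr hN
  have hq : star v ⬝ᵥ ((Nᴴ * M - Mᴴ * N) *ᵥ v) = 0 := by
    simp only [sub_mulVec, ← mulVec_mulVec, hNv, mulVec_zero, sub_zero, dotProduct_mulVec,
      ← star_mulVec, star_zero, zero_vecMul, zero_dotProduct]
  simpa [smul_mulVec, hq] using hpos.dotProduct_mulVec_pos hv

end Matrix

section SiegelAction

variable {n : ℕ}

lemma siegelJ_eq_neg_J : siegelJ n = -J (Fin n) ℝ := by
  rw [siegelJ, J, fromBlocks_neg, neg_zero, neg_neg]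

lemma mem_Sp_iff {g : Matrix (Fin n ⊕ Fin n) (Fin n ⊕ Fin n) ℝ} :
    g ∈ Sp n ↔ g ∈ symplecticGroup (Fin n) ℝ := by
  rw [SymplecticGroup.mem_iff', Sp, Set.mem_ofPred_eq, siegelJ_eq_neg_J, Matrix.mul_neg,
    Matrix.neg_mul, neg_inj]

lemma mem_SiegelUHS_iff {Z : Matrix (Fin n) (Fin n) ℂ} :
    Z ∈ SiegelUHS n ↔ Zᵀ = Z ∧ ((2 * Complex.I)⁻¹ • (Z - Zᴴ)).PosDef := by
  refine and_congr_right fun hZ => ?_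
  rw [conjTranspose, hZ]
  rfl

lemma I_smul_one_mem_SiegelUHS : Complex.I • (1 : Matrix (Fin n) (Fin n) ℂ) ∈ SiegelUHS n := by
  rw [mem_SiegelUHS_iff, conjTranspose_smul, conjTranspose_one, transpose_smul, transpose_one]
  refine ⟨rfl, ?_⟩
  have hscalar : (2 * Complex.I)⁻¹ * (Complex.I - star Complex.I) = 1 := by
    rw [Complex.star_def, Complex.conj_I, sub_neg_eq_add, ← two_mul,
      inv_mul_cancel₀ (mul_ne_zero two_ne_zero Complex.I_ne_zero)]
  rw [← sub_smul, smul_smul, hscalar, one_smul]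
  exact PosDef.one

-- The type ascription on `1` is needed: left to unification, `*` elaborates with the
-- `CStarMatrix` instance, which `rw` then cannot see through.
lemma map_ofReal_mul_fromRows {g : Matrix (Fin n ⊕ Fin n) (Fin n ⊕ Fin n) ℝ}
    (Z : Matrix (Fin n) (Fin n) ℂ) :
    g.map Complex.ofReal * fromRows Z (1 : Matrix (Fin n) (Fin n) ℂ) =
      fromRows (g.toBlocks₁₁.map Complex.ofReal * Z + g.toBlocks₁₂.map Complex.ofReal)
        (g.toBlocks₂₁.map Complex.ofReal * Z + g.toBlocks₂₂.map Complex.ofReal) := by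
  conv_lhs => rw [← fromBlocks_toBlocks g, fromBlocks_map]
  rw [fromBlocks_mul_fromRows, Matrix.mul_one, Matrix.mul_one]

lemma exists_map_ofReal_mul_fromRows_eq (g : Matrix (Fin n ⊕ Fin n) (Fin n ⊕ Fin n) ℝ)
    (Z : Matrix (Fin n) (Fin n) ℂ) :
    ∃ M N, g.map Complex.ofReal * fromRows Z (1 : Matrix (Fin n) (Fin n) ℂ) = fromRows M N :=
  ⟨_, _, map_ofReal_mul_fromRows Z⟩

lemma spAct_eq_of_map_ofReal_mul_fromRows {g : Matrix (Fin n ⊕ Fin n) (Fin n ⊕ Fin n) ℝ}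
    {Z M N : Matrix (Fin n) (Fin n) ℂ}
    (h : g.map Complex.ofReal * fromRows Z (1 : Matrix (Fin n) (Fin n) ℂ) = fromRows M N) :
    spAct g Z = M * N⁻¹ := by
  rw [map_ofReal_mul_fromRows] at h
  obtain ⟨rfl, rfl⟩ := fromRows_inj h
  rfl

lemma isUnit_det_of_map_ofReal_mul_fromRows {g : Matrix (Fin n ⊕ Fin n) (Fin n ⊕ Fin n) ℝ}
    (hg : g ∈ symplecticGroup (Fin n) ℝ) {Z M N : Matrix (Fin n) (Fin n) ℂ}
    (hZ : Z ∈ SiegelUHS n)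
    (h : g.map Complex.ofReal * fromRows Z (1 : Matrix (Fin n) (Fin n) ℂ) = fromRows M N) :
    IsUnit N.det := by
  have hform : Nᴴ * M - Mᴴ * N = Z - Zᴴ := by
    rw [← conjTranspose_fromRows_J_fromRows, ← h, conjTranspose_J_mul_map_ofReal hg,
      conjTranspose_fromRows_J_fromRows, conjTranspose_one, Matrix.one_mul, Matrix.mul_one]
  exact isUnit_det_of_posDef_smul_sub _ (hform ▸ (mem_SiegelUHS_iff.mp hZ).2)

lemma spAct_one (Z : Matrix (Fin n) (Fin n) ℂ) : spAct 1 Z = Z := by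
  rw [spAct_eq_of_map_ofReal_mul_fromRows (M := Z) (N := 1) (by simp), inv_one, Matrix.mul_one]

lemma spAct_mul (g : Matrix (Fin n ⊕ Fin n) (Fin n ⊕ Fin n) ℝ)
    {g' : Matrix (Fin n ⊕ Fin n) (Fin n ⊕ Fin n) ℝ} (hg' : g' ∈ symplecticGroup (Fin n) ℝ)
    {Z : Matrix (Fin n) (Fin n) ℂ} (hZ : Z ∈ SiegelUHS n) :
    spAct (g * g') Z = spAct g (spAct g' Z) := by
  obtain ⟨M', N', h'⟩ := exists_map_ofReal_mul_fromRows_eq g' Z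
  have hN' := isUnit_det_of_map_ofReal_mul_fromRows hg' hZ h'
  obtain ⟨M, N, h⟩ := exists_map_ofReal_mul_fromRows_eq g (M' * N'⁻¹)
  have hgg' : (g * g').map Complex.ofReal * fromRows Z (1 : Matrix (Fin n) (Fin n) ℂ) =
      fromRows (M * N') (N * N') := by
    rw [map_ofReal_mul, Matrix.mul_assoc, h', ← fromRows_mul, ← h, Matrix.mul_assoc,
      fromRows_mul, Matrix.mul_assoc, nonsing_inv_mul _ hN', Matrix.mul_one, Matrix.one_mul]
  rw [spAct_eq_of_map_ofReal_mul_fromRows hgg', spAct_eq_of_map_ofReal_mul_fromRows h',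
    spAct_eq_of_map_ofReal_mul_fromRows h, Matrix.mul_inv_rev, Matrix.mul_assoc,
    ← Matrix.mul_assoc N', mul_nonsing_inv _ hN', Matrix.one_mul]

lemma spAct_fromBlocks_I_smul_one {X R S : Matrix (Fin n) (Fin n) ℝ} (hRS : Rᵀ * S = 1) :
    spAct (fromBlocks R (X * S) 0 S) (Complex.I • 1) =
      X.map Complex.ofReal + Complex.I • (R * Rᵀ).map Complex.ofReal := by
  have hRSc : (R.map Complex.ofReal)ᵀ * S.map Complex.ofReal = 1 := by
    rw [← transpose_map, ← map_ofReal_mul, hRS,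
      Matrix.map_one _ Complex.ofReal_zero Complex.ofReal_one]
  have hSinv : (S.map Complex.ofReal)⁻¹ = (R.map Complex.ofReal)ᵀ := inv_eq_left_inv hRSc
  have hSR : S.map Complex.ofReal * (R.map Complex.ofReal)ᵀ = 1 := mul_eq_one_comm.mp hRSc
  rw [spAct_eq_of_map_ofReal_mul_fromRows (map_ofReal_mul_fromRows _)]
  simp only [toBlocks_fromBlocks₁₁, toBlocks_fromBlocks₁₂, toBlocks_fromBlocks₂₁,
    toBlocks_fromBlocks₂₂, map_ofReal_mul, Matrix.map_zero _ Complex.ofReal_zero, Matrix.zero_mul,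
    zero_add, hSinv]
  rw [Matrix.add_mul, Matrix.mul_assoc _ (S.map _), hSR, Matrix.mul_one, Matrix.mul_smul,
    Matrix.mul_one, Matrix.smul_mul, transpose_map, add_comm]

open scoped MatrixOrder in
lemma exists_mem_symplecticGroup_spAct_I_smul_one_eq {Z : Matrix (Fin n) (Fin n) ℂ}
    (hZ : Z ∈ SiegelUHS n) :
    ∃ g ∈ symplecticGroup (Fin n) ℝ, spAct g (Complex.I • 1) = Z := by
  obtain ⟨hsym, hpos⟩ := hZ
  set X := Z.map Complex.re
  set Y := Z.map Complex.im
  have hZXY : Z = X.map Complex.ofReal + Complex.I • Y.map Complex.ofReal := by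
    ext i j
    simp [X, Y, mul_comm Complex.I, Complex.re_add_im]
  have hX : Xᵀ = X := by rw [← transpose_map, hsym]
  have hYc : (2 * Complex.I)⁻¹ • (Z - Z.map (starRingEnd ℂ)) = Y.map Complex.ofReal := by
    ext i j
    simp only [Matrix.smul_apply, Matrix.sub_apply, Matrix.map_apply, smul_eq_mul,
      Complex.sub_conj, Y]
    field_simp
    push_cast
    ring
  obtain ⟨R, hR, hYR⟩ := CStarAlgebra.isStrictlyPositive_iff_eq_mul_star_self.mp
    (PosDef.of_map_ofReal (hYc ▸ hpos)).isStrictlyPositive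
  have hRS : Rᵀ * (Rᵀ)⁻¹ = 1 :=
    mul_nonsing_inv _ (by rw [det_transpose, ← isUnit_iff_isUnit_det]; exact hR)
  refine ⟨fromBlocks R (X * (Rᵀ)⁻¹) 0 (Rᵀ)⁻¹,
    SymplecticGroup.fromBlocks_mem_of_transpose_mul_eq_one hX hRS, ?_⟩
  rw [spAct_fromBlocks_I_smul_one hRS, ← conjTranspose_eq_transpose_of_trivial,
    ← star_eq_conjTranspose, ← hYR, hZXY]

end SiegelAction

theorem statement5_general {n : ℕ} :
    (∀ Z ∈ SiegelUHS n, ∃ g ∈ Sp n,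
      spAct g (Complex.I • (1 : Matrix (Fin n) (Fin n) ℂ)) = Z) ∧
    (∀ g ∈ Sp n, ∀ g' ∈ Sp n,
      (spAct g (Complex.I • (1 : Matrix (Fin n) (Fin n) ℂ)) =
          spAct g' (Complex.I • (1 : Matrix (Fin n) (Fin n) ℂ)) ↔
        ∃ u ∈ Sp n,
          spAct u (Complex.I • (1 : Matrix (Fin n) (Fin n) ℂ)) =
            Complex.I • (1 : Matrix (Fin n) (Fin n) ℂ) ∧ g' = g * u)) := by
  simp only [mem_Sp_iff]
  refine ⟨fun Z hZ => exists_mem_symplecticGroup_spAct_I_smul_one_eq hZ,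
    fun g hg g' hg' => ⟨fun h => ?_, ?_⟩⟩
  · have hdet := SymplecticGroup.symplectic_det hg
    refine ⟨g⁻¹ * g', mul_mem (SymplecticGroup.nonsing_inv_mem hg) hg', ?_,
      by rw [← Matrix.mul_assoc, mul_nonsing_inv _ hdet, Matrix.one_mul]⟩
    rw [spAct_mul _ hg' I_smul_one_mem_SiegelUHS, ← h, ← spAct_mul _ hg I_smul_one_mem_SiegelUHS,
      nonsing_inv_mul _ hdet, spAct_one]
  · rintro ⟨u, hu, hfix, rfl⟩
    rw [spAct_mul g hu I_smul_one_mem_SiegelUHS, hfix]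

/-- The action of `Sp_{2n}(ℝ)` on the Siegel upper half-space is transitive (every point
is `g · (i·1ₙ)` for some symplectic `g`); consequently two symplectic matrices move the
base point `i·1ₙ` to the same point exactly when they differ by right multiplication by an
element of the stabilizer of `i·1ₙ`, so `H_n ≅ Sp_{2n}(ℝ)/U_n(ℝ)`. -/
theorem statement5 {n : ℕ} (hn : 1 ≤ n) :
    (∀ Z ∈ SiegelUHS n, ∃ g ∈ Sp n,
      spAct g (Complex.I • (1 : Matrix (Fin n) (Fin n) ℂ)) = Z) ∧
    (∀ g ∈ Sp n, ∀ g' ∈ Sp n,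
      (spAct g (Complex.I • (1 : Matrix (Fin n) (Fin n) ℂ)) =
          spAct g' (Complex.I • (1 : Matrix (Fin n) (Fin n) ℂ)) ↔
        ∃ u ∈ Sp n,
          spAct u (Complex.I • (1 : Matrix (Fin n) (Fin n) ℂ)) =
            Complex.I • (1 : Matrix (Fin n) (Fin n) ℂ) ∧ g' = g * u)) :=
  statement5_general
end

section
/- The action of U(a,b) on the unitary symmetric domain D_{a,b} is transitive: for every U ∈ D_{a,b} there exists g ∈ U(a,b) with g·0 = U. Consequently D_{a,b} ≅ U(a,b)/(U(a) × U(b)). -/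
/-!
For `g = [[A, B], [C, D]] ∈ U(a,b)` the block `D` is invertible, since `DᴴD = 1 + BᴴB`, and
`g · 0 = BD⁻¹`.

If `1 - UᴴU > 0` then also `1 - UUᴴ > 0`, its inverse being `1 + U(1 - UᴴU)⁻¹Uᴴ`. With
`X = (1 - UUᴴ)^(-1/2)` and `Y = (1 - UᴴU)^(-1/2)`, the boost `[[X, UY], [UᴴX, Y]]` lies in `U(a,b)`
and sends `0` to `UYY⁻¹ = U`.

Since `BD⁻¹ = B'D'⁻¹` iff `[B'; D'] = [B; D] K` for some `K`, `g · 0 = g' · 0` exactly when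
`g⁻¹g'` maps the span of the last `b` basis vectors into itself, i.e. when its upper right block
vanishes, i.e. when it fixes `0`.
-/

open Matrix ComplexOrder

/-- The signature matrix `diag(1_a, -1_b)`. -/
def sigMatrix (a b : ℕ) : Matrix (Fin a ⊕ Fin b) (Fin a ⊕ Fin b) ℂ :=
  Matrix.fromBlocks 1 0 0 (-1)

/-- The group `U(a,b)`: complex matrices `g` with `g* diag(1_a, -1_b) g = diag(1_a, -1_b)`. -/
def Uab (a b : ℕ) : Set (Matrix (Fin a ⊕ Fin b) (Fin a ⊕ Fin b) ℂ) :=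
  {g | gᴴ * sigMatrix a b * g = sigMatrix a b}

/-- The unitary symmetric domain `D_{a,b}`. -/
def UnitaryDomain (a b : ℕ) : Set (Matrix (Fin a) (Fin b) ℂ) :=
  {U | (1 - Uᴴ * U).PosDef}

/-- The action `g · U = (AU + B)(CU + D)⁻¹`, where `g = [[A,B],[C,D]]` in blocks. -/
noncomputable def uabAct {a b : ℕ} (g : Matrix (Fin a ⊕ Fin b) (Fin a ⊕ Fin b) ℂ)
    (U : Matrix (Fin a) (Fin b) ℂ) : Matrix (Fin a) (Fin b) ℂ :=
  (g.toBlocks₁₁ * U + g.toBlocks₁₂) * (g.toBlocks₂₁ * U + g.toBlocks₂₂)⁻¹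

namespace Matrix

theorem PosDef.one_sub_mul_conjTranspose {m n 𝕜 : Type*} [Fintype m] [Fintype n]
    [DecidableEq m] [DecidableEq n] [RCLike 𝕜] {U : Matrix m n 𝕜}
    (hU : (1 - Uᴴ * U).PosDef) : (1 - U * Uᴴ).PosDef := by
  set N := 1 - Uᴴ * U with hN
  have hNN : N * N⁻¹ = 1 := mul_nonsing_inv _ ((isUnit_iff_isUnit_det _).mp hU.isUnit)
  have hinv : (1 - U * Uᴴ) * (1 + U * N⁻¹ * Uᴴ) = 1 := by
    calc (1 - U * Uᴴ) * (1 + U * N⁻¹ * Uᴴ) = 1 - U * Uᴴ + U * (N * N⁻¹) * Uᴴ := by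
          simp only [hN, Matrix.sub_mul, Matrix.mul_add, Matrix.mul_sub, Matrix.one_mul,
            Matrix.mul_one, Matrix.mul_assoc]
      _ = 1 := by rw [hNN, Matrix.mul_one, sub_add_cancel]
  rw [← inv_eq_left_inv hinv]
  exact (PosDef.one.add_posSemidef (hU.inv.posSemidef.mul_mul_conjTranspose_same U)).inv

open scoped MatrixOrder in
theorem PosDef.sqrt_inv_mul_mul_sqrt_inv {n 𝕜 : Type*} [Fintype n] [DecidableEq n] [RCLike 𝕜]
    {M : Matrix n n 𝕜} (hM : M.PosDef) : CFC.sqrt M⁻¹ * M * CFC.sqrt M⁻¹ = 1 := by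
  have hsq : CFC.sqrt M⁻¹ * CFC.sqrt M⁻¹ = M⁻¹ :=
    CFC.sqrt_mul_sqrt_self _ hM.inv.posSemidef.nonneg
  rw [← mul_eq_one_comm, ← Matrix.mul_assoc, hsq,
    nonsing_inv_mul _ ((isUnit_iff_isUnit_det _).mp hM.isUnit)]

theorem fromRows_eq_fromRows_mul_iff_mul_inv_eq {m n K : Type*} [Fintype n] [DecidableEq n]
    [Field K] {B B' : Matrix m n K} {D D' : Matrix n n K} (hD : IsUnit D.det)
    (hD' : IsUnit D'.det) :
    (∃ k : Matrix n n K, fromRows B' D' = fromRows B D * k) ↔ B * D⁻¹ = B' * D'⁻¹ := by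
  simp only [fromRows_mul, fromRows_ext_iff]
  constructor
  · rintro ⟨k, rfl, rfl⟩
    have hk : IsUnit k.det := isUnit_of_mul_isUnit_right (det_mul D k ▸ hD')
    rw [Matrix.mul_inv_rev, Matrix.mul_assoc, ← Matrix.mul_assoc k, mul_nonsing_inv _ hk,
      Matrix.one_mul]
  · intro h
    refine ⟨D⁻¹ * D', ?_, ?_⟩
    · rw [← Matrix.mul_assoc, h, Matrix.mul_assoc, nonsing_inv_mul _ hD', Matrix.mul_one]
    · rw [← Matrix.mul_assoc, mul_nonsing_inv _ hD, Matrix.one_mul]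

theorem mul_fromRows_zero_one {m n R : Type*} [Fintype m] [Fintype n] [DecidableEq n] [Ring R]
    (g : Matrix (m ⊕ n) (m ⊕ n) R) :
    g * fromRows (0 : Matrix m n R) (1 : Matrix n n R) = fromRows g.toBlocks₁₂ g.toBlocks₂₂ := by
  rw [← fromBlocks_toBlocks g, fromBlocks_mul_fromRows]
  simp

end Matrix

theorem sigMatrix_mul_self (a b : ℕ) : sigMatrix a b * sigMatrix a b = 1 := by
  simp [sigMatrix, fromBlocks_multiply, ← fromBlocks_one]

theorem uabAct_zero {a b : ℕ} (g : Matrix (Fin a ⊕ Fin b) (Fin a ⊕ Fin b) ℂ) :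
    uabAct g 0 = g.toBlocks₁₂ * g.toBlocks₂₂⁻¹ := by
  simp [uabAct]

namespace Uab

variable {a b : ℕ}

theorem fromBlocks_mem_iff {A : Matrix (Fin a) (Fin a) ℂ} {B : Matrix (Fin a) (Fin b) ℂ}
    {C : Matrix (Fin b) (Fin a) ℂ} {D : Matrix (Fin b) (Fin b) ℂ} :
    fromBlocks A B C D ∈ Uab a b ↔
      Aᴴ * A - Cᴴ * C = 1 ∧ Aᴴ * B - Cᴴ * D = 0 ∧ Bᴴ * A - Dᴴ * C = 0 ∧
        Bᴴ * B - Dᴴ * D = -1 := by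
  simp only [Uab, sigMatrix, Set.mem_ofPred_eq, fromBlocks_conjTranspose, fromBlocks_multiply,
    Matrix.mul_one, Matrix.mul_zero, add_zero, zero_add, Matrix.mul_neg, Matrix.neg_mul,
    fromBlocks_inj]
  simp only [← sub_eq_add_neg]

variable {g g' : Matrix (Fin a ⊕ Fin b) (Fin a ⊕ Fin b) ℂ}

theorem isUnit_det (hg : g ∈ Uab a b) : IsUnit g.det := by
  refine isUnit_det_of_left_inverse (B := sigMatrix a b * gᴴ * sigMatrix a b) ?_
  calc sigMatrix a b * gᴴ * sigMatrix a b * g = sigMatrix a b * (gᴴ * sigMatrix a b * g) := by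
        simp only [Matrix.mul_assoc]
    _ = 1 := by rw [hg, sigMatrix_mul_self]

theorem mul_mem (hg : g ∈ Uab a b) (hg' : g' ∈ Uab a b) : g * g' ∈ Uab a b := by
  change (g * g')ᴴ * sigMatrix a b * (g * g') = sigMatrix a b
  calc (g * g')ᴴ * sigMatrix a b * (g * g') = g'ᴴ * (gᴴ * sigMatrix a b * g) * g' := by
        simp only [conjTranspose_mul, Matrix.mul_assoc]
    _ = sigMatrix a b := by rw [hg, hg']

theorem inv_mem (hg : g ∈ Uab a b) : g⁻¹ ∈ Uab a b := by
  change g⁻¹ᴴ * sigMatrix a b * g⁻¹ = sigMatrix a b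
  calc g⁻¹ᴴ * sigMatrix a b * g⁻¹ = g⁻¹ᴴ * (gᴴ * sigMatrix a b * g) * g⁻¹ := by rw [hg]
    _ = (g * g⁻¹)ᴴ * sigMatrix a b * (g * g⁻¹) := by
        simp only [conjTranspose_mul, Matrix.mul_assoc]
    _ = sigMatrix a b := by
        rw [mul_nonsing_inv _ (isUnit_det hg), conjTranspose_one, Matrix.one_mul,
          Matrix.mul_one]

theorem isUnit_det_toBlocks₂₂ (hg : g ∈ Uab a b) : IsUnit g.toBlocks₂₂.det := by
  rw [← fromBlocks_toBlocks g, fromBlocks_mem_iff] at hg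
  have hDD := hg.2.2.2
  rw [← neg_sub, neg_inj, sub_eq_iff_eq_add'] at hDD
  have hpos : (g.toBlocks₂₂ᴴ * g.toBlocks₂₂).PosDef :=
    hDD ▸ PosDef.posSemidef_add (posSemidef_conjTranspose_mul_self _) PosDef.one
  have := (isUnit_iff_isUnit_det _).mp hpos.isUnit
  rw [det_mul] at this
  exact isUnit_of_mul_isUnit_right this

theorem uabAct_zero_eq_zero_iff (hg : g ∈ Uab a b) : uabAct g 0 = 0 ↔ g.toBlocks₁₂ = 0 := by
  rw [uabAct_zero]
  constructor
  · intro h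
    simpa [Matrix.mul_assoc, nonsing_inv_mul _ (isUnit_det_toBlocks₂₂ hg)] using
      congrArg (· * g.toBlocks₂₂) h
  · intro h
    rw [h, Matrix.zero_mul]

theorem uabAct_zero_eq_uabAct_zero_iff (hg : g ∈ Uab a b) (hg' : g' ∈ Uab a b) :
    uabAct g 0 = uabAct g' 0 ↔ ∃ h ∈ Uab a b, h.toBlocks₁₂ = 0 ∧ g' = g * h := by
  set ι : Matrix (Fin a ⊕ Fin b) (Fin b) ℂ := fromRows 0 1
  rw [uabAct_zero, uabAct_zero, ← fromRows_eq_fromRows_mul_iff_mul_inv_eq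
    (isUnit_det_toBlocks₂₂ hg) (isUnit_det_toBlocks₂₂ hg'), ← mul_fromRows_zero_one,
    ← mul_fromRows_zero_one]
  constructor
  · rintro ⟨k, hk⟩
    have hι : (g⁻¹ * g') * ι = fromRows 0 k := by
      rw [Matrix.mul_assoc, hk, ← Matrix.mul_assoc, ← Matrix.mul_assoc,
        nonsing_inv_mul _ (isUnit_det hg), Matrix.one_mul, fromRows_mul]
      simp
    refine ⟨g⁻¹ * g', mul_mem (inv_mem hg) hg', ?_, ?_⟩
    · rw [mul_fromRows_zero_one, fromRows_ext_iff] at hι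
      exact hι.1
    · rw [← Matrix.mul_assoc, mul_nonsing_inv _ (isUnit_det hg), Matrix.one_mul]
  · rintro ⟨h, -, h₁₂, rfl⟩
    refine ⟨h.toBlocks₂₂, ?_⟩
    rw [Matrix.mul_assoc, Matrix.mul_assoc, mul_fromRows_zero_one, h₁₂, fromRows_mul]
    simp

end Uab

section Boost

open scoped MatrixOrder

noncomputable def boost {m n 𝕜 : Type*} [Fintype m] [Fintype n] [DecidableEq m] [DecidableEq n]
    [RCLike 𝕜] (U : Matrix m n 𝕜) : Matrix (m ⊕ n) (m ⊕ n) 𝕜 :=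
  fromBlocks (CFC.sqrt (1 - U * Uᴴ)⁻¹) (U * CFC.sqrt (1 - Uᴴ * U)⁻¹)
    (Uᴴ * CFC.sqrt (1 - U * Uᴴ)⁻¹) (CFC.sqrt (1 - Uᴴ * U)⁻¹)

variable {a b : ℕ} {U : Matrix (Fin a) (Fin b) ℂ}

theorem boost_mem_Uab (hU : U ∈ UnitaryDomain a b) : boost U ∈ Uab a b := by
  have hX := (PosDef.one_sub_mul_conjTranspose hU).sqrt_inv_mul_mul_sqrt_inv
  have hY := PosDef.sqrt_inv_mul_mul_sqrt_inv hU
  rw [boost, Uab.fromBlocks_mem_iff, conjTranspose_mul, conjTranspose_mul,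
    conjTranspose_conjTranspose, (CFC.sqrt_nonneg _).posSemidef.isHermitian.eq,
    (CFC.sqrt_nonneg _).posSemidef.isHermitian.eq]
  set X := CFC.sqrt (1 - U * Uᴴ)⁻¹
  set Y := CFC.sqrt (1 - Uᴴ * U)⁻¹
  refine ⟨?_, ?_, ?_, ?_⟩
  · rw [← hX]
    simp only [Matrix.mul_sub, Matrix.sub_mul, Matrix.mul_one, Matrix.mul_assoc]
  · simp [Matrix.mul_assoc]
  · simp [Matrix.mul_assoc]
  · rw [← hY]
    simp only [Matrix.mul_sub, Matrix.sub_mul, Matrix.mul_one, Matrix.mul_assoc, neg_sub]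

theorem uabAct_boost_zero (hU : U ∈ UnitaryDomain a b) : uabAct (boost U) 0 = U := by
  have hY : IsUnit (CFC.sqrt (1 - Uᴴ * U)⁻¹).det :=
    isUnit_det_of_right_inverse (B := (1 - Uᴴ * U) * CFC.sqrt (1 - Uᴴ * U)⁻¹) <| by
      rw [← Matrix.mul_assoc]
      exact PosDef.sqrt_inv_mul_mul_sqrt_inv hU
  rw [uabAct_zero, boost, toBlocks_fromBlocks₁₂, toBlocks_fromBlocks₂₂, Matrix.mul_assoc,
    mul_nonsing_inv _ hY, Matrix.mul_one]

end Boost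

theorem statement8_general {a b : ℕ} :
    (∀ U ∈ UnitaryDomain a b, ∃ g ∈ Uab a b,
      uabAct g (0 : Matrix (Fin a) (Fin b) ℂ) = U) ∧
    (∀ g ∈ Uab a b, ∀ g' ∈ Uab a b,
      (uabAct g (0 : Matrix (Fin a) (Fin b) ℂ) =
          uabAct g' (0 : Matrix (Fin a) (Fin b) ℂ) ↔
        ∃ h ∈ Uab a b,
          uabAct h (0 : Matrix (Fin a) (Fin b) ℂ) = 0 ∧ g' = g * h)) := by
  refine ⟨fun U hU ↦ ⟨boost U, boost_mem_Uab hU, uabAct_boost_zero hU⟩, fun g hg g' hg' ↦ ?_⟩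
  rw [Uab.uabAct_zero_eq_uabAct_zero_iff hg hg']
  exact exists_congr fun h ↦ and_congr_right fun hh ↦ by rw [Uab.uabAct_zero_eq_zero_iff hh]

/-- The action of `U(a,b)` on `D_{a,b}` is transitive: every `U ∈ D_{a,b}` equals `g · 0`
for some `g ∈ U(a,b)`; consequently two elements of `U(a,b)` move the base point `0` to the
same point exactly when they differ by right multiplication by an element of the stabilizer
of `0`, so `D_{a,b} ≅ U(a,b)/(U(a) × U(b))`. -/
theorem statement8 {a b : ℕ} (ha : b ≤ a) (hb : 1 ≤ b) :
    (∀ U ∈ UnitaryDomain a b, ∃ g ∈ Uab a b,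
      uabAct g (0 : Matrix (Fin a) (Fin b) ℂ) = U) ∧
    (∀ g ∈ Uab a b, ∀ g' ∈ Uab a b,
      (uabAct g (0 : Matrix (Fin a) (Fin b) ℂ) =
          uabAct g' (0 : Matrix (Fin a) (Fin b) ℂ) ↔
        ∃ h ∈ Uab a b,
          uabAct h (0 : Matrix (Fin a) (Fin b) ℂ) = 0 ∧ g' = g * h)) :=
  statement8_general
end

section
/- The quotient module M = (W ⊗_R W)/N has generic rank p·q: the dimension of M ⊗_R K over the fraction field K is p·q, and a K-basis is given by the images of the elements e_i ⊗ e_j for 1 ≤ i ≤ p < j ≤ r. -/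
open TensorProduct

noncomputable section

/-- The operator `i(β)` on `W = R^r` (with `r = p + q`): multiplication by `β` on the first
`p` coordinates and by `σ β` on the last `q` coordinates. -/
def iOp {R : Type*} [CommRing R] (p q : ℕ) (σ : R ≃+* R) (β : R)
    (w : Fin (p + q) → R) : Fin (p + q) → R :=
  fun j => (if (j : ℕ) < p then β else σ β) * w j

/-- The submodule `N ⊆ W ⊗_R W` generated by the elements `i(β)u ⊗ v - u ⊗ i(σβ)v` and
`u ⊗ v - v ⊗ u`. -/
def relN (R : Type*) [CommRing R] (p q : ℕ) (σ : R ≃+* R) :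
    Submodule R ((Fin (p + q) → R) ⊗[R] (Fin (p + q) → R)) :=
  Submodule.span R
    ({x | ∃ (β : R) (u v : Fin (p + q) → R),
        x = (iOp p q σ β u) ⊗ₜ[R] v - u ⊗ₜ[R] (iOp p q σ (σ β) v)} ∪
      {x | ∃ u v : Fin (p + q) → R, x = u ⊗ₜ[R] v - v ⊗ₜ[R] u})

/-- The quotient module `M = (W ⊗_R W)/N`. -/
abbrev quotM (R : Type*) [CommRing R] (p q : ℕ) (σ : R ≃+* R) :=
  ((Fin (p + q) → R) ⊗[R] (Fin (p + q) → R)) ⧸ relN R p q σ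

/-- The image in `K ⊗_R M` of the basis tensor `e_i ⊗ e_j`, where `i` ranges over the first
`p` indices and `j` over the last `q` indices. -/
def mixedGen (R : Type*) [CommRing R] (K : Type*) [Field K] [Algebra R K]
    (p q : ℕ) (σ : R ≃+* R) (ij : Fin p × Fin q) : K ⊗[R] quotM R p q σ :=
  (1 : K) ⊗ₜ[R] (Submodule.Quotient.mk
    ((Pi.single (Fin.castAdd q ij.1) (1 : R)) ⊗ₜ[R]
      (Pi.single (Fin.natAdd p ij.2) (1 : R))))

section Aux

variable {R : Type*} [CommRing R] (p q : ℕ) (σ : R ≃+* R)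

lemma iOp_single_lt {a : Fin (p + q)} (h : (a : ℕ) < p) (β c : R) :
    iOp p q σ β (Pi.single a c) = β • (Pi.single a c : Fin (p + q) → R) := by
  funext j
  by_cases hj : j = a
  · subst hj; simp [iOp, h]
  · simp [iOp, Pi.single_eq_of_ne hj]

lemma iOp_single_ge {a : Fin (p + q)} (h : ¬ (a : ℕ) < p) (β c : R) :
    iOp p q σ β (Pi.single a c) = σ β • (Pi.single a c : Fin (p + q) → R) := by
  funext j
  by_cases hj : j = a
  · subst hj; simp [iOp, h]
  · simp [iOp, Pi.single_eq_of_ne hj]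

/-- The bilinear map `φ(u,v)_{ij} = u_i v_j + u_j v_i`. -/
def phi2 : (Fin (p + q) → R) →ₗ[R] (Fin (p + q) → R) →ₗ[R] (Fin p × Fin q → R) :=
  LinearMap.mk₂ R
    (fun u v ij => u (Fin.castAdd q ij.1) * v (Fin.natAdd p ij.2) +
      u (Fin.natAdd p ij.2) * v (Fin.castAdd q ij.1))
    (by intros; funext ij; simp; ring)
    (by intros; funext ij; simp; ring)
    (by intros; funext ij; simp; ring)
    (by intros; funext ij; simp; ring)

def Phi : (Fin (p + q) → R) ⊗[R] (Fin (p + q) → R) →ₗ[R] (Fin p × Fin q → R) :=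
  TensorProduct.lift (phi2 p q)

@[simp] lemma Phi_tmul (u v : Fin (p + q) → R) (ij : Fin p × Fin q) :
    Phi p q (u ⊗ₜ[R] v) ij = u (Fin.castAdd q ij.1) * v (Fin.natAdd p ij.2) +
      u (Fin.natAdd p ij.2) * v (Fin.castAdd q ij.1) := rfl

lemma relN_le_ker (hσ2 : ∀ x, σ (σ x) = x) :
    relN R p q σ ≤ LinearMap.ker (Phi p q) := by
  rw [relN, Submodule.span_le]
  rintro x (⟨β, u, v, rfl⟩ | ⟨u, v, rfl⟩)
  · simp only [SetLike.mem_coe, LinearMap.mem_ker, map_sub, sub_eq_zero]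
    funext ij
    have hi := ij.1.isLt
    have hj : ¬ (p + (ij.2 : ℕ) < p) := by omega
    simp only [Phi_tmul, iOp, Fin.coe_castAdd, Fin.coe_natAdd, hσ2, if_pos hi, if_neg hj]
    ring
  · simp only [SetLike.mem_coe, LinearMap.mem_ker, map_sub, sub_eq_zero]
    funext ij
    simp only [Phi_tmul]
    ring

/-- The map `Φ` descends to the quotient. -/
def Phibar (hσ2 : ∀ x, σ (σ x) = x) : quotM R p q σ →ₗ[R] (Fin p × Fin q → R) :=
  Submodule.liftQ _ (Phi p q) (relN_le_ker p q σ hσ2)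

@[simp] lemma Phibar_mk (hσ2 : ∀ x, σ (σ x) = x) (x) :
    Phibar p q σ hσ2 (Submodule.Quotient.mk x) = Phi p q x := rfl

end Aux

/-- The quotient module `M = (W ⊗_R W)/N` has generic rank `p·q`: after scalar extension to
the fraction field `K`, its dimension over `K` is `p·q`, and a `K`-basis is given by the
images of the elements `e_i ⊗ e_j` for `1 ≤ i ≤ p < j ≤ r`. -/
theorem statement13 (R : Type*) [CommRing R] [IsDomain R]
    (K : Type*) [Field K] [Algebra R K] [IsFractionRing R K]
    (p q : ℕ) (hp : 1 ≤ p) (hq : 1 ≤ q)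
    (σ : R ≃+* R) (hσ2 : ∀ x, σ (σ x) = x) (hσ : σ ≠ RingEquiv.refl R) :
    Module.finrank K (K ⊗[R] quotM R p q σ) = p * q ∧
    LinearIndependent K (mixedGen R K p q σ) ∧
    Submodule.span K (Set.range (mixedGen R K p q σ)) = ⊤ := by
  -- the detecting linear map
  set g0 : quotM R p q σ →ₗ[R] (Fin p × Fin q → K) :=
    LinearMap.pi (fun ij => (Algebra.linearMap R K) ∘ₗ (LinearMap.proj ij) ∘ₗ
      Phibar p q σ hσ2) with hg0
  set Ψ : K ⊗[R] quotM R p q σ →ₗ[K] (Fin p × Fin q → K) :=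
    LinearMap.liftBaseChange K g0 with hΨ
  have hΨgen : ∀ ij, Ψ (mixedGen R K p q σ ij) = Pi.single ij (1 : K) := by
    intro ij
    rw [mixedGen, hΨ, LinearMap.liftBaseChange_tmul, one_smul]
    funext ij'
    simp only [hg0, LinearMap.pi_apply, LinearMap.coe_comp, Function.comp_apply,
      LinearMap.proj_apply, Phibar_mk, Phi_tmul, Algebra.linearMap_apply]
    have hcross : (Pi.single (Fin.castAdd q ij.1) (1:R) : Fin (p+q) → R) (Fin.natAdd p ij'.2) = 0 :=
      Pi.single_eq_of_ne (by
        have h1 := ij.1.isLt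
        simp only [ne_eq, Fin.ext_iff, Fin.coe_natAdd, Fin.coe_castAdd]
        omega) 1
    rcases eq_or_ne ij' ij with h | h
    · subst h
      rw [hcross, Pi.single_eq_same, Pi.single_eq_same, Pi.single_eq_same]
      simp
    · have h1 : ij'.1 ≠ ij.1 ∨ ij'.2 ≠ ij.2 := by
        by_contra hcon; push_neg at hcon; exact h (Prod.ext hcon.1 hcon.2)
      rw [Pi.single_eq_of_ne h, hcross]
      rcases h1 with h1 | h1
      · rw [Pi.single_eq_of_ne (show Fin.castAdd q ij'.1 ≠ Fin.castAdd q ij.1 by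
          simp only [ne_eq, Fin.ext_iff, Fin.coe_castAdd]
          exact fun hh => h1 (Fin.ext hh)) 1]
        simp
      · rw [Pi.single_eq_of_ne (show Fin.natAdd p ij'.2 ≠ Fin.natAdd p ij.2 by
          simp only [ne_eq, Fin.ext_iff, Fin.coe_natAdd]
          omega) 1]
        simp
  -- linear independence
  have hli : LinearIndependent K (mixedGen R K p q σ) := by
    have h2 : LinearIndependent K
        (fun ij : Fin p × Fin q => (Pi.single ij 1 : Fin p × Fin q → K)) := by
      have h3 := (Pi.basisFun K (Fin p × Fin q)).linearIndependent
      have he : ⇑(Pi.basisFun K (Fin p × Fin q)) =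
          fun ij : Fin p × Fin q => (Pi.single ij 1 : Fin p × Fin q → K) := by
        funext ij; rw [Pi.basisFun_apply]
      rwa [he] at h3
    apply LinearIndependent.of_comp Ψ
    have he2 : ⇑Ψ ∘ mixedGen R K p q σ =
        fun ij : Fin p × Fin q => (Pi.single ij 1 : Fin p × Fin q → K) :=
      funext fun ij => hΨgen ij
    rw [he2]
    exact h2
  -- a nonfixed element
  obtain ⟨β₀, hβ₀⟩ : ∃ x, σ x ≠ x := by
    by_contra h
    push_neg at h
    exact hσ (RingEquiv.ext h)
  set c : R := β₀ - σ β₀ with hc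
  have hc0 : c ≠ 0 := sub_ne_zero.mpr (Ne.symm hβ₀)
  have hcK : algebraMap R K c ≠ 0 :=
    (map_ne_zero_iff _ (IsFractionRing.injective R K)).mpr hc0
  -- spanning
  set S := Submodule.span K (Set.range (mixedGen R K p q σ)) with hS
  have hzero : ∀ a b : Fin (p + q), ((a : ℕ) < p ↔ (b : ℕ) < p) →
      (1 : K) ⊗ₜ[R] (Submodule.Quotient.mk
        ((Pi.single a 1 : Fin (p+q) → R) ⊗ₜ[R] (Pi.single b 1 : Fin (p+q) → R))
        : quotM R p q σ) = 0 := by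
    intro a b hab
    have hmem : c • ((Pi.single a 1 : Fin (p+q) → R) ⊗ₜ[R] (Pi.single b 1 : Fin (p+q) → R))
        ∈ relN R p q σ := by
      apply Submodule.subset_span
      left
      by_cases ha : (a : ℕ) < p
      · refine ⟨β₀, Pi.single a 1, Pi.single b 1, ?_⟩
        rw [iOp_single_lt p q σ ha, iOp_single_lt p q σ (hab.mp ha), hc, smul_tmul',
          sub_smul, sub_tmul, smul_tmul (σ β₀)]
      · refine ⟨σ β₀, Pi.single a 1, Pi.single b 1, ?_⟩
        rw [iOp_single_ge p q σ ha, iOp_single_ge p q σ (fun h => ha (hab.mpr h))]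
        simp only [hσ2]
        rw [hc, smul_tmul', sub_smul, sub_tmul, smul_tmul (σ β₀)]
    have hq0 : c • (Submodule.Quotient.mk
        ((Pi.single a 1 : Fin (p+q) → R) ⊗ₜ[R] (Pi.single b 1 : Fin (p+q) → R))
        : quotM R p q σ) = 0 := by
      rw [← Submodule.Quotient.mk_smul, Submodule.Quotient.mk_eq_zero]
      exact hmem
    have key : (algebraMap R K c) • ((1 : K) ⊗ₜ[R] (Submodule.Quotient.mk
        ((Pi.single a 1 : Fin (p+q) → R) ⊗ₜ[R] (Pi.single b 1 : Fin (p+q) → R))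
        : quotM R p q σ)) = 0 := by
      rw [algebraMap_smul, ← tmul_smul, hq0, tmul_zero]
    have key2 : ((algebraMap R K c)⁻¹ * algebraMap R K c) • ((1 : K) ⊗ₜ[R]
        (Submodule.Quotient.mk
        ((Pi.single a 1 : Fin (p+q) → R) ⊗ₜ[R] (Pi.single b 1 : Fin (p+q) → R))
        : quotM R p q σ)) = 0 := by
      rw [mul_smul, key, smul_zero]
    rwa [inv_mul_cancel₀ hcK, one_smul] at key2
  have hmixed : ∀ a b : Fin (p + q), (a : ℕ) < p → ¬ (b : ℕ) < p →
      (1 : K) ⊗ₜ[R] (Submodule.Quotient.mk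
        ((Pi.single a 1 : Fin (p+q) → R) ⊗ₜ[R] (Pi.single b 1 : Fin (p+q) → R))
        : quotM R p q σ) ∈ S := by
    intro a b ha hb
    have hb' : (b : ℕ) - p < q := by omega
    have e1 : Fin.castAdd q (⟨(a : ℕ), ha⟩ : Fin p) = a := Fin.ext rfl
    have e2 : Fin.natAdd p (⟨(b : ℕ) - p, hb'⟩ : Fin q) = b := Fin.ext (by simp; omega)
    refine Submodule.subset_span ⟨(⟨(a : ℕ), ha⟩, ⟨(b : ℕ) - p, hb'⟩), ?_⟩
    rw [mixedGen]
    simp only [e1, e2]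
  have hgen : ∀ a b : Fin (p + q),
      (1 : K) ⊗ₜ[R] (Submodule.Quotient.mk
        ((Pi.single a 1 : Fin (p+q) → R) ⊗ₜ[R] (Pi.single b 1 : Fin (p+q) → R))
        : quotM R p q σ) ∈ S := by
    intro a b
    by_cases ha : (a : ℕ) < p <;> by_cases hb : (b : ℕ) < p
    · rw [hzero a b (by tauto)]; exact zero_mem S
    · exact hmixed a b ha hb
    · have hswap : (Submodule.Quotient.mk
          ((Pi.single a 1 : Fin (p+q) → R) ⊗ₜ[R] (Pi.single b 1 : Fin (p+q) → R))
          : quotM R p q σ) = Submodule.Quotient.mk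
          ((Pi.single b 1 : Fin (p+q) → R) ⊗ₜ[R] (Pi.single a 1 : Fin (p+q) → R)) := by
        rw [Submodule.Quotient.eq]
        exact Submodule.subset_span (Or.inr ⟨_, _, rfl⟩)
      rw [hswap]
      exact hmixed b a hb ha
    · rw [hzero a b (by tauto)]; exact zero_mem S
  have hone : ∀ m : quotM R p q σ, (1 : K) ⊗ₜ[R] m ∈ S := by
    intro m
    obtain ⟨x, rfl⟩ := Submodule.Quotient.mk_surjective _ m
    have hx : x ∈ Submodule.span R (Set.range
        (((Pi.basisFun R (Fin (p+q))).tensorProduct (Pi.basisFun R (Fin (p+q)))) :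
          _ → (Fin (p+q) → R) ⊗[R] (Fin (p+q) → R))) := by
      rw [Module.Basis.span_eq]; trivial
    induction hx using Submodule.span_induction with
    | mem y hy =>
      obtain ⟨⟨a, b⟩, rfl⟩ := hy
      rw [Module.Basis.tensorProduct_apply, Pi.basisFun_apply, Pi.basisFun_apply]
      exact hgen a b
    | zero =>
      rw [show (Submodule.Quotient.mk 0 : quotM R p q σ) = 0 from rfl, tmul_zero]
      exact zero_mem S
    | add y z _ _ hy hz => simpa [tmul_add] using add_mem hy hz
    | smul r y _ hy =>
      have : (1 : K) ⊗ₜ[R] (Submodule.Quotient.mk (r • y) : quotM R p q σ) =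
          (algebraMap R K r) • ((1 : K) ⊗ₜ[R]
            (Submodule.Quotient.mk y : quotM R p q σ)) := by
        rw [Submodule.Quotient.mk_smul, tmul_smul, algebraMap_smul]
      rw [this]
      exact S.smul_mem _ hy
  have hspan : S = ⊤ := by
    rw [eq_top_iff]
    rintro x -
    induction x using TensorProduct.induction_on with
    | zero => exact zero_mem S
    | tmul k m =>
      have : k ⊗ₜ[R] m = k • ((1 : K) ⊗ₜ[R] m) := by
        rw [smul_tmul', smul_eq_mul, mul_one]
      rw [this]
      exact S.smul_mem _ (hone m)
    | add y z hy hz => exact add_mem hy hz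
  refine ⟨?_, hli, hspan⟩
  have hb := Module.Basis.mk hli hspan.ge
  rw [Module.finrank_eq_card_basis hb]
  simp

end
end

section
/- The ℝ-linear endomorphism ψ_Z of M_{n×m}(ℂ) × M_{n×m}(ℂ) defined by ψ_Z(β₁, β₂) = (β₁Z + β₂, conj(β₁)Zᵀ + conj(β₂)) is bijective, and the absolute value of its determinant as an ℝ-linear map equals 2^{2nm}·(det Y)^{2n}. In particular, the image under ψ_Z of any full-rank ℤ-lattice of M_{n×m}(ℂ) × M_{n×m}(ℂ) is again a full-rank ℤ-lattice. -/
/-!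
Write `W = [[Z, Zᴴ], [1, 1]]`. Juxtaposing `β₁, β₂` into one `n × 2m` matrix `[β₁ | β₂]`, the
`ℂ`-linear map `T(β₁, β₂) = (β₁Z + β₂, β₁Zᴴ + β₂)` is right multiplication by `W`, so
`det_ℂ T = (det W)ⁿ = det(Z - Zᴴ)ⁿ = ((2i)ᵐ det Y)ⁿ` by a Schur complement. Conjugating the second
coordinate of `T` gives `ψ_Z`; that conjugation is an involution, so `|det_ℝ ψ_Z| = det_ℝ T`,
which is `|det_ℂ T|² = 2^{2nm} (det Y)^{2n}` since `det Y > 0`. In particular `ψ_Z` is a linear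
automorphism, hence a homeomorphism, and it maps full lattices to full lattices.
-/

open Matrix ComplexOrder

noncomputable section

/-- The entrywise complex conjugate of a matrix. -/
def matConj {n m : ℕ} (M : Matrix (Fin n) (Fin m) ℂ) : Matrix (Fin n) (Fin m) ℂ :=
  M.map (starRingEnd ℂ)

/-- The `ℝ`-linear endomorphism `ψ_Z(β₁, β₂) = (β₁Z + β₂, conj(β₁)Zᵀ + conj(β₂))` of
`M_{n×m}(ℂ) × M_{n×m}(ℂ)`. -/
def psiZ {n m : ℕ} (Z : Matrix (Fin m) (Fin m) ℂ) :
    (Matrix (Fin n) (Fin m) ℂ × Matrix (Fin n) (Fin m) ℂ) →ₗ[ℝ]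
      (Matrix (Fin n) (Fin m) ℂ × Matrix (Fin n) (Fin m) ℂ) where
  toFun b := (b.1 * Z + b.2, matConj b.1 * Zᵀ + matConj b.2)
  map_add' x y := by
    ext i j <;>
      simp [matConj, Matrix.add_mul, Matrix.add_apply, Matrix.mul_apply, Matrix.map_apply,
        Finset.sum_add_distrib, add_mul, map_add] <;> ring
  map_smul' c x := by
    ext i j <;>
      simp [matConj, Matrix.smul_apply, Matrix.mul_apply, Matrix.map_apply, Finset.mul_sum,
        Complex.real_smul, smul_mul_assoc, _root_.map_mul, Complex.conj_ofReal, mul_assoc]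

/-- A full-rank `ℤ`-lattice in a real topological vector space: a `ℤ`-submodule which is
discrete and spans the whole space over `ℝ`. -/
def IsFullLattice {E : Type*} [AddCommGroup E] [Module ℝ E] [TopologicalSpace E]
    (L : Submodule ℤ E) : Prop :=
  DiscreteTopology L ∧ Submodule.span ℝ (L : Set E) = ⊤


namespace Matrix

variable {ι κ κ₁ κ₂ R : Type*} [Fintype ι] [Fintype κ] [DecidableEq κ] [CommRing R]

theorem det_mulRightLinearMap (W : Matrix κ κ R) :
    LinearMap.det (mulRightLinearMap ι R W) = W.det ^ Fintype.card ι := by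
  change LinearMap.det (M := ι → κ → R)
    (LinearMap.pi fun i => W.vecMulLinear ∘ₗ LinearMap.proj i) = _
  rw [LinearMap.det_pi, ← mulVecLin_transpose, ← toLin'_apply', LinearMap.det_toLin',
    det_transpose, Finset.prod_const, Finset.card_univ]

variable (ι R) in
def fromColsLinearEquiv : (Matrix ι κ₁ R × Matrix ι κ₂ R) ≃ₗ[R] Matrix ι (κ₁ ⊕ κ₂) R where
  toFun b := fromCols b.1 b.2
  invFun A := (A.toCols₁, A.toCols₂)
  map_add' _ _ := by ext i (j | j) <;> simp
  map_smul' _ _ := by ext i (j | j) <;> simp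
  left_inv _ := by simp
  right_inv _ := by simp

end Matrix

theorem LinearMap.abs_det_eq_one_of_comp_self {R M : Type*} [CommRing R] [LinearOrder R]
    [IsStrictOrderedRing R] [AddCommGroup M] [Module R M] {f : M →ₗ[R] M}
    (hf : f ∘ₗ f = LinearMap.id) : |LinearMap.det f| = 1 := by
  have hsq : LinearMap.det f * LinearMap.det f = 1 := by
    rw [← LinearMap.det_comp, hf, LinearMap.det_id]
  rcases mul_self_eq_one_iff.mp hsq with h | h <;> simp [h]

theorem IsFullLattice.map {E F : Type*} [AddCommGroup E] [Module ℝ E] [TopologicalSpace E]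
    [AddCommGroup F] [Module ℝ F] [TopologicalSpace F] {L : Submodule ℤ E} (hL : IsFullLattice L)
    (e : E ≃L[ℝ] F) : IsFullLattice (L.map ((e : E →ₗ[ℝ] F).restrictScalars ℤ)) := by
  obtain ⟨hdisc, hspan⟩ := hL
  refine ⟨?_, ?_⟩
  · have hmem : ∀ y : L.map ((e : E →ₗ[ℝ] F).restrictScalars ℤ), e.symm y ∈ L := by
      rintro ⟨_, x, hx, rfl⟩
      simpa using hx
    refine DiscreteTopology.of_continuous_injective (f := fun y => (⟨e.symm y, hmem y⟩ : L))
      (by fun_prop) fun y y' h => Subtype.ext (e.symm.injective (congrArg Subtype.val h))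
  · rw [Submodule.map_coe, LinearMap.coe_restrictScalars,
      Submodule.span_image (e : E →ₗ[ℝ] F), hspan, Submodule.map_top]
    exact LinearMap.range_eq_top.mpr e.surjective

section psiZ

variable {n m : ℕ} (Z : Matrix (Fin m) (Fin m) ℂ)

variable (n) in
def psiZComplexLinear :
    (Matrix (Fin n) (Fin m) ℂ × Matrix (Fin n) (Fin m) ℂ) →ₗ[ℂ]
      (Matrix (Fin n) (Fin m) ℂ × Matrix (Fin n) (Fin m) ℂ) :=
  (fromColsLinearEquiv (Fin n) ℂ).symm.conj (mulRightLinearMap (Fin n) ℂ (fromBlocks Z Zᴴ 1 1))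

theorem psiZComplexLinear_apply (b : Matrix (Fin n) (Fin m) ℂ × Matrix (Fin n) (Fin m) ℂ) :
    psiZComplexLinear n Z b = (b.1 * Z + b.2, b.1 * Zᴴ + b.2) := by
  simp [psiZComplexLinear, LinearEquiv.conj_apply, fromColsLinearEquiv, fromCols_mul_fromBlocks]

theorem det_psiZComplexLinear : LinearMap.det (psiZComplexLinear n Z) = (Z - Zᴴ).det ^ n := by
  rw [psiZComplexLinear, LinearEquiv.conj_apply, LinearMap.comp_assoc, LinearMap.det_conj,
    det_mulRightLinearMap, det_fromBlocks_one₂₂, Matrix.mul_one, Fintype.card_fin]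

variable (n m) in
def conjSnd :
    (Matrix (Fin n) (Fin m) ℂ × Matrix (Fin n) (Fin m) ℂ) →ₗ[ℝ]
      (Matrix (Fin n) (Fin m) ℂ × Matrix (Fin n) (Fin m) ℂ) where
  toFun b := (b.1, matConj b.2)
  map_add' _ _ := by ext <;> simp [matConj]
  map_smul' _ _ := by ext <;> simp [matConj, Complex.real_smul]

theorem conjSnd_comp_self : conjSnd n m ∘ₗ conjSnd n m = LinearMap.id :=
  LinearMap.ext fun _ => by ext <;> simp [conjSnd, matConj]

theorem psiZ_eq_conjSnd_comp :
    psiZ (n := n) Z = conjSnd n m ∘ₗ (psiZComplexLinear n Z).restrictScalars ℝ := by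
  have hconj : Zᴴ.map (starRingEnd ℂ) = Zᵀ := by ext; simp
  refine LinearMap.ext fun b => ?_
  change (b.1 * Z + b.2, matConj b.1 * Zᵀ + matConj b.2) =
    ((psiZComplexLinear n Z b).1, matConj (psiZComplexLinear n Z b).2)
  rw [psiZComplexLinear_apply, matConj, matConj, matConj, Matrix.map_add _ (map_add _),
    Matrix.map_mul, hconj]

theorem abs_det_psiZ :
    |LinearMap.det (psiZ (n := n) Z)| = Complex.normSq (Z - Zᴴ).det ^ n := by
  rw [psiZ_eq_conjSnd_comp, LinearMap.det_comp, abs_mul,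
    LinearMap.abs_det_eq_one_of_comp_self conjSnd_comp_self, one_mul,
    LinearMap.det_restrictScalars, Algebra.norm_complex_apply, det_psiZComplexLinear, map_pow,
    abs_of_nonneg (pow_nonneg (Complex.normSq_nonneg _) _)]

end psiZ

theorem normSq_det_two_I_smul {ι : Type*} [Fintype ι] [DecidableEq ι] (Y : Matrix ι ι ℂ)
    (hY : Y.det.im = 0) :
    Complex.normSq ((2 * Complex.I) • Y).det = 2 ^ (2 * Fintype.card ι) * Y.det.re ^ 2 := by
  rw [det_smul, map_mul, map_pow, Complex.normSq_apply Y.det, hY, pow_mul]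
  norm_num [Complex.normSq_apply]
  ring

theorem statement15_general {n m : ℕ}
    (Z : Matrix (Fin m) (Fin m) ℂ)
    (hZ : ((2 * Complex.I)⁻¹ • (Z - Zᴴ)).PosDef) :
    Function.Bijective (psiZ (n := n) Z) ∧
    |LinearMap.det (psiZ (n := n) Z)| =
      2 ^ (2 * n * m) * (((2 * Complex.I)⁻¹ • (Z - Zᴴ)).det.re) ^ (2 * n) ∧
    (∀ L : Submodule ℤ (Matrix (Fin n) (Fin m) ℂ × Matrix (Fin n) (Fin m) ℂ),
      IsFullLattice L →
        IsFullLattice (L.map ((psiZ (n := n) Z).restrictScalars ℤ))) := by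
  set Y := (2 * Complex.I)⁻¹ • (Z - Zᴴ)
  obtain ⟨hre, him⟩ := Complex.pos_iff.mp hZ.det_pos
  have hZY : Z - Zᴴ = (2 * Complex.I) • Y := (smul_inv_smul₀ (by simp) _).symm
  have hdet : |LinearMap.det (psiZ (n := n) Z)| = 2 ^ (2 * n * m) * Y.det.re ^ (2 * n) := by
    rw [abs_det_psiZ, hZY, normSq_det_two_I_smul Y him.symm, Fintype.card_fin]
    ring
  have hbij : Function.Bijective (psiZ (n := n) Z) := by
    refine (Module.End.isUnit_iff _).mp ((LinearMap.isUnit_iff_isUnit_det _).mpr ?_)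
    refine isUnit_iff_ne_zero.mpr fun h0 => ?_
    rw [h0, abs_zero] at hdet
    exact (mul_pos (by positivity) (pow_pos hre _)).ne' hdet.symm
  exact ⟨hbij, hdet, fun L hL => hL.map (LinearEquiv.ofBijective _ hbij).toContinuousLinearEquiv⟩

/-- The map `ψ_Z` is bijective, the absolute value of its determinant as an `ℝ`-linear map
equals `2^{2nm}·(det Y)^{2n}` where `Y = (Z - Z*)/(2i)`, and the image under `ψ_Z` of any
full-rank `ℤ`-lattice is again a full-rank `ℤ`-lattice. -/
theorem statement15 {n m : ℕ} (hn : 1 ≤ n) (hm : 1 ≤ m)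
    (Z : Matrix (Fin m) (Fin m) ℂ)
    (hZ : ((2 * Complex.I)⁻¹ • (Z - Zᴴ)).PosDef) :
    Function.Bijective (psiZ (n := n) Z) ∧
    |LinearMap.det (psiZ (n := n) Z)| =
      2 ^ (2 * n * m) * (((2 * Complex.I)⁻¹ • (Z - Zᴴ)).det.re) ^ (2 * n) ∧
    (∀ L : Submodule ℤ (Matrix (Fin n) (Fin m) ℂ × Matrix (Fin n) (Fin m) ℂ),
      IsFullLattice L →
        IsFullLattice (L.map ((psiZ (n := n) Z).restrictScalars ℤ))) :=
  statement15_general Z hZ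

end
end
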